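/- arXiv:1906.03571 — 2 statements merged into one kernel-verified Lean document; each statement's English description precedes it below -/
import Mathlib

section
/- Let 0 < k ≤ 1 and β ≥ 1 be real numbers, and let a, b, c ≥ 0 satisfy c ≥ a + b and b ≤ k·a. Then c^β ≥ a^β + ((1+k)^β - 1)/k^β · b^β. -/
/-!
By homogeneity, `((1 + k) ^ β - 1) / k ^ β * b ^ β = (b / k + b) ^ β - (b / k) ^ β`.
Since `x ↦ x ^ β` is convex, its increments `(x + b) ^ β - x ^ β` grow with `x`, and
`b / k ≤ a`; hence this is at most `(a + b) ^ β - a ^ β ≤ c ^ β - a ^ β`.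
-/

open Set

theorem ConvexOn.map_add_sub_map_le_of_le {𝕜 : Type*} [Field 𝕜] [LinearOrder 𝕜]
    [IsStrictOrderedRing 𝕜] {s : Set 𝕜} {f : 𝕜 → 𝕜} (hf : ConvexOn 𝕜 s f) {x y d : 𝕜}
    (hx : x ∈ s) (hyd : y + d ∈ s) (hxy : x ≤ y) (hd : 0 ≤ d) :
    f (x + d) - f x ≤ f (y + d) - f y := by
  rcases hd.eq_or_lt with rfl | hd
  · simp
  have hxd : x + d ∈ s := hf.1.ordConnected.out hx hyd ⟨by linarith, by linarith⟩
  have hy : y ∈ s := hf.1.ordConnected.out hx hyd ⟨hxy, by linarith⟩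
  -- compare the secants over `[x, x + d]` and `[y, y + d]` through the secant over `[x, y + d]`
  have h₁ := hf.secant_mono hx hxd hyd (by linarith) (by linarith) (by linarith : x + d ≤ y + d)
  have h₂ := hf.secant_mono hyd hx hy (by linarith) (by linarith) hxy
  rw [add_sub_cancel_left] at h₁
  rw [← neg_sub (f (y + d)), ← neg_sub (y + d), neg_div_neg_eq, ← neg_sub (f (y + d)),
    show y - (y + d) = -d by ring, div_neg, neg_div, neg_neg] at h₂
  exact (div_le_div_iff_of_pos_right hd).1 (h₁.trans h₂)

theorem Real.rpow_add_sub_rpow_le_of_le {β x y d : ℝ} (hβ : 1 ≤ β) (hx : 0 ≤ x) (hxy : x ≤ y)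
    (hd : 0 ≤ d) : (x + d) ^ β - x ^ β ≤ (y + d) ^ β - y ^ β :=
  (convexOn_rpow hβ).map_add_sub_map_le_of_le hx (mem_Ici.2 (by linarith)) hxy hd

theorem Real.one_add_rpow_sub_one_div_rpow_mul_rpow {β k b : ℝ} (hk : 0 < k) (hb : 0 ≤ b) :
    ((1 + k) ^ β - 1) / k ^ β * b ^ β = (b / k + b) ^ β - (b / k) ^ β := by
  have hsum : b / k + b = (1 + k) * b / k := by field_simp
  rw [hsum, div_rpow (by positivity) hk.le, div_rpow hb hk.le, mul_rpow (by positivity) hb]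
  ring

theorem stmt_13_general (k β a b c : ℝ) (hk0 : 0 < k) (hβ : 1 ≤ β)
    (ha : 0 ≤ a) (hb : 0 ≤ b)
    (hmono : c ≥ a + b) (hcond : b ≤ k * a) :
    c ^ β ≥ a ^ β + ((1 + k) ^ β - 1) / k ^ β * b ^ β := by
  have hbk : b / k ≤ a := by rw [div_le_iff₀ hk0]; linarith
  have hincr := Real.rpow_add_sub_rpow_le_of_le hβ (div_nonneg hb hk0.le) hbk hb
  have hc : (a + b) ^ β ≤ c ^ β := Real.rpow_le_rpow (by linarith) hmono (by linarith)
  rw [Real.one_add_rpow_sub_one_div_rpow_mul_rpow hk0 hb]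
  linarith

theorem stmt_13 (k β a b c : ℝ) (hk0 : 0 < k) (hk1 : k ≤ 1) (hβ : 1 ≤ β)
    (ha : 0 ≤ a) (hb : 0 ≤ b) (hc : 0 ≤ c)
    (hmono : c ≥ a + b) (hcond : b ≤ k * a) :
    c ^ β ≥ a ^ β + ((1 + k) ^ β - 1) / k ^ β * b ^ β :=
  stmt_13_general k β a b c hk0 hβ ha hb hmono hcond
end

section
/- Let 0 < k ≤ 1 and β ≥ 2 be real numbers, and let a, b, c ≥ 0 satisfy c² ≥ a² + b², b² ≤ k·a², and a > 0. Then c^β ≥ a^β·(1 + ((1+k)^{β/2} - 1)/k^{β/2}·(b²/a²)^{β/2}), and this lower bound equals a^β + ((1+k)^{β/2} - 1)/k^{β/2}·b^β. -/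
/-!
For `m ≥ 1` the increment `u ↦ (u + t) ^ m - u ^ m` is nondecreasing, by convexity of `x ↦ x ^ m`.
Comparing it at `t / k ≤ 1` gives `(1 + t) ^ m - 1 ≥ ((1 + k) ^ m - 1) * (t / k) ^ m`. Take
`t = b² / a²`, `m = β / 2` and write `x ^ β = (x²) ^ (β / 2)`, so that `c ^ β ≥ (a² + b²) ^ m`.
-/

open Real Set

theorem ConvexOn.map_add_sub_map_le {𝕜 : Type*} [Field 𝕜] [LinearOrder 𝕜] [IsStrictOrderedRing 𝕜]
    {s : Set 𝕜} {f : 𝕜 → 𝕜} (hf : ConvexOn 𝕜 s f) {u v d : 𝕜} (hu : u ∈ s) (hvd : v + d ∈ s)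
    (huv : u ≤ v) (hd : 0 ≤ d) : f (u + d) - f u ≤ f (v + d) - f v := by
  rcases hd.eq_or_lt with rfl | hd
  · simp
  have hud : u + d ∈ s := hf.1.ordConnected.out hu hvd ⟨by linarith, by linarith⟩
  have hv : v ∈ s := hf.1.ordConnected.out hu hvd ⟨huv, by linarith⟩
  -- both secants are compared with the chord from `u` to `v + d`
  have h : slope f u (u + d) ≤ slope f v (v + d) := calc
    _ ≤ slope f u (v + d) :=
        hf.slope_mono hu ⟨hud, by simpa using hd.ne'⟩ ⟨hvd, by simp; linarith⟩ (by linarith)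
    _ = slope f (v + d) u := slope_comm f u (v + d)
    _ ≤ slope f (v + d) v := hf.slope_mono hvd ⟨hu, by simp; linarith⟩ ⟨hv, by simp; linarith⟩ huv
    _ = slope f v (v + d) := slope_comm f (v + d) v
  rwa [slope_def_field, slope_def_field, add_sub_cancel_left, add_sub_cancel_left,
    div_le_div_iff_of_pos_right hd] at h

theorem one_add_mul_rpow_le_one_add_rpow {m k t : ℝ} (hm : 1 ≤ m) (hk : 0 < k) (ht : 0 ≤ t)
    (htk : t ≤ k) : 1 + ((1 + k) ^ m - 1) / k ^ m * t ^ m ≤ (1 + t) ^ m := by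
  have hincr := (convexOn_rpow hm).map_add_sub_map_le (u := t / k) (v := 1) (d := t)
    (by simp; positivity) (by simp; linarith) ((div_le_one hk).2 htk) ht
  have hsplit : t / k + t = t / k * (1 + k) := by field_simp
  rw [hsplit, mul_rpow (by positivity) (by linarith), div_rpow ht hk.le, one_rpow] at hincr
  calc 1 + ((1 + k) ^ m - 1) / k ^ m * t ^ m
      = 1 + (t ^ m / k ^ m * (1 + k) ^ m - t ^ m / k ^ m) := by ring
    _ ≤ (1 + t) ^ m := by linarith

theorem rpow_eq_sq_rpow_div_two {x : ℝ} (hx : 0 ≤ x) (β : ℝ) : x ^ β = (x ^ 2) ^ (β / 2) := by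
  rw [← rpow_natCast_mul hx, Nat.cast_ofNat, mul_div_cancel₀ β two_ne_zero]

theorem stmt_19_general (k β a b c : ℝ) (hk0 : 0 < k) (hβ : 2 ≤ β)
    (ha : 0 < a) (hb : 0 ≤ b) (hc : 0 ≤ c)
    (hmono : c ^ 2 ≥ a ^ 2 + b ^ 2) (hcond : b ^ 2 ≤ k * a ^ 2) :
    c ^ β ≥ a ^ β * (1 + ((1 + k) ^ (β / 2) - 1) / k ^ (β / 2) * (b ^ 2 / a ^ 2) ^ (β / 2)) ∧
    a ^ β * (1 + ((1 + k) ^ (β / 2) - 1) / k ^ (β / 2) * (b ^ 2 / a ^ 2) ^ (β / 2)) =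
      a ^ β + ((1 + k) ^ (β / 2) - 1) / k ^ (β / 2) * b ^ β := by
  have ha2 : 0 < a ^ 2 := by positivity
  have ht : 0 ≤ b ^ 2 / a ^ 2 := by positivity
  have hsum : a ^ 2 * (1 + b ^ 2 / a ^ 2) = a ^ 2 + b ^ 2 := by field_simp
  have hb2 : a ^ 2 * (b ^ 2 / a ^ 2) = b ^ 2 := mul_div_cancel₀ _ ha2.ne'
  rw [rpow_eq_sq_rpow_div_two ha.le, rpow_eq_sq_rpow_div_two hb, rpow_eq_sq_rpow_div_two hc]
  constructor
  · calc (a ^ 2) ^ (β / 2) * (1 + ((1 + k) ^ (β / 2) - 1) / k ^ (β / 2) * (b ^ 2 / a ^ 2) ^ (β / 2))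
        ≤ (a ^ 2) ^ (β / 2) * (1 + b ^ 2 / a ^ 2) ^ (β / 2) := by
          gcongr
          exact one_add_mul_rpow_le_one_add_rpow (by linarith) hk0 ht
            ((div_le_iff₀ ha2).2 hcond)
      _ = (a ^ 2 + b ^ 2) ^ (β / 2) := by rw [← mul_rpow ha2.le (by positivity), hsum]
      _ ≤ (c ^ 2) ^ (β / 2) := by gcongr
  · rw [mul_add, mul_one, mul_left_comm, ← mul_rpow ha2.le ht, hb2]

theorem stmt_19 (k β a b c : ℝ) (hk0 : 0 < k) (hk1 : k ≤ 1) (hβ : 2 ≤ β)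
    (ha : 0 < a) (hb : 0 ≤ b) (hc : 0 ≤ c)
    (hmono : c ^ 2 ≥ a ^ 2 + b ^ 2) (hcond : b ^ 2 ≤ k * a ^ 2) :
    c ^ β ≥ a ^ β * (1 + ((1 + k) ^ (β / 2) - 1) / k ^ (β / 2) * (b ^ 2 / a ^ 2) ^ (β / 2)) ∧
    a ^ β * (1 + ((1 + k) ^ (β / 2) - 1) / k ^ (β / 2) * (b ^ 2 / a ^ 2) ^ (β / 2)) =
      a ^ β + ((1 + k) ^ (β / 2) - 1) / k ^ (β / 2) * b ^ β :=
  stmt_19_general k β a b c hk0 hβ ha hb hc hmono hcond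
end
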